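/- Let k be a commutative ring with a derivation δ : k → k, acting on matrices entrywise. Let A₀, B₁, …, B_r be n×n matrices over k with δ(A₀) = 0 and δ(B_i) = 0 entrywise, B_i · B_j = 0 for all i, j, and suppose ⁅A₀, B₁⁆ = λ • B₁ for some λ ∈ k with δ(λ) = 0. Let β₀, β₁, …, β_r ∈ k, set A := β₀ • A₀ + Σ_{i=1}^{r} β_i • B_i, and suppose g ∈ k satisfies δ(g) = λ·β₀·g + β₁. Then P := 1 + g • B₁ is invertible and P⁻¹ · (A·P − δ(P)) = β₀ • A₀ + Σ_{i=2}^{r} β_i • B_i. -/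

import Mathlib

/-! Since `B₁² = 0`, `P = 1 + g • B₁` has inverse `1 - g • B₁` and `δ(P) = δ(g) • B₁`, so
`P[A] = A + g • ⁅A, B₁⁆ - g² • (B₁ * A * B₁) - δ(g) • B₁`. The bracket hypothesis and
`Bᵢ * Bⱼ = 0` give `⁅A, B₁⁆ = λ β₀ • B₁` and `B₁ * A * B₁ = 0`, and then the equation for `g`
cancels exactly the term `β₁ • B₁` of `A`. -/

open Matrix Finset

section SquareZero

variable {k R : Type*} [CommRing k] [Ring R] [Algebra k R]

theorem mul_mul_eq_zero_of_lie_eq_smul {X N : R} {c : k} (hN : N * N = 0)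
    (hXN : ⁅X, N⁆ = c • N) : N * X * N = 0 := by
  have hNX : N * X = X * N - c • N := by
    rw [← hXN, Ring.lie_def]; abel
  rw [hNX, sub_mul, mul_assoc, hN, smul_mul_assoc, hN, mul_zero, smul_zero, sub_zero]

theorem one_sub_smul_mul_one_add_smul {N : R} (hN : N * N = 0) (g : k) :
    (1 - g • N) * (1 + g • N) = 1 := by
  simp only [sub_mul, mul_add, mul_one, one_mul, smul_mul_smul_comm, hN, smul_zero]
  abel

theorem one_add_smul_mul_one_sub_smul {N : R} (hN : N * N = 0) (g : k) :
    (1 + g • N) * (1 - g • N) = 1 := by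
  simp only [add_mul, mul_sub, mul_one, one_mul, smul_mul_smul_comm, hN, smul_zero]
  abel

theorem isUnit_one_add_smul {N : R} (hN : N * N = 0) (g : k) : IsUnit (1 + g • N) :=
  ⟨⟨_, _, one_add_smul_mul_one_sub_smul hN g, one_sub_smul_mul_one_add_smul hN g⟩, rfl⟩

theorem one_sub_smul_mul_gauge {N : R} (hN : N * N = 0) (A : R) (g d : k) :
    (1 - g • N) * (A * (1 + g • N) - d • N) = A + g • ⁅A, N⁆ - (g * g) • (N * A * N) - d • N := by
  simp only [Ring.lie_def, mul_add, mul_sub, sub_mul, mul_one, one_mul, smul_mul_assoc,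
    mul_smul_comm, ← mul_assoc, hN, smul_zero]
  module

theorem lie_smul_add_sum_smul_eq_smul {ι : Type*} [Fintype ι] {X : R} {N : ι → R} {i₀ : ι}
    {c : k} (hN : ∀ i j, N i * N j = 0) (hXN : ⁅X, N i₀⁆ = c • N i₀) (b : k) (β : ι → k) :
    ⁅b • X + ∑ i, β i • N i, N i₀⁆ = (b * c) • N i₀ := by
  rw [Ring.lie_def] at hXN ⊢
  simp only [add_mul, mul_add, sum_mul, mul_sum, smul_mul_assoc, mul_smul_comm, hN, smul_zero,
    sum_const_zero, add_zero]
  rw [← smul_sub, hXN, smul_smul]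

end SquareZero

section Derivation

variable {k : Type*} [CommRing k] {δ : k → k}

theorem map_zero_of_map_add (hδadd : ∀ a b : k, δ (a + b) = δ a + δ b) : δ 0 = 0 := by
  simpa using hδadd 0 0

theorem map_one_of_leibniz (hδmul : ∀ a b : k, δ (a * b) = a * δ b + δ a * b) : δ 1 = 0 := by
  simpa using hδmul 1 1

theorem Matrix.map_one_add_smul_of_map_eq_zero {n : Type*} [DecidableEq n]
    (hδadd : ∀ a b : k, δ (a + b) = δ a + δ b)
    (hδmul : ∀ a b : k, δ (a * b) = a * δ b + δ a * b)
    {N : Matrix n n k} (hN : N.map δ = 0) (g : k) :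
    (1 + g • N).map δ = δ g • N := by
  ext i j
  have hNij : δ (N i j) = 0 := congrFun (congrFun hN i) j
  simp only [map_apply, add_apply, smul_apply, one_apply, smul_eq_mul, hδadd, hδmul, hNij]
  split_ifs <;> simp [map_zero_of_map_add hδadd, map_one_of_leibniz hδmul]

end Derivation

theorem partial_reduction_eigenvalue_general
    (k : Type*) [CommRing k] (δ : k → k)
    (hδadd : ∀ a b : k, δ (a + b) = δ a + δ b)
    (hδmul : ∀ a b : k, δ (a * b) = a * δ b + δ a * b)
    (n r : ℕ)
    (A₀ : Matrix (Fin n) (Fin n) k) (B : Fin (r + 1) → Matrix (Fin n) (Fin n) k)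
    (hBconst : ∀ i, (B i).map δ = 0)
    (hBmul : ∀ i j, B i * B j = 0)
    (lam : k)
    (hbracket : ⁅A₀, B 0⁆ = lam • B 0)
    (β₀ : k) (β : Fin (r + 1) → k)
    (A : Matrix (Fin n) (Fin n) k) (hA : A = β₀ • A₀ + ∑ i, β i • B i)
    (g : k) (hg : δ g = lam * β₀ * g + β 0)
    (P : Matrix (Fin n) (Fin n) k) (hP : P = 1 + g • B 0) :
    IsUnit P ∧
      P⁻¹ * (A * P - P.map δ) =
        β₀ • A₀ + ∑ i ∈ Finset.univ.erase 0, β i • B i := by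
  have hB₀ : B 0 * B 0 = 0 := hBmul 0 0
  have hPinv : P⁻¹ = 1 - g • B 0 :=
    inv_eq_right_inv (hP ▸ one_add_smul_mul_one_sub_smul hB₀ g)
  have hbracketA : ⁅A, B 0⁆ = (β₀ * lam) • B 0 :=
    hA ▸ lie_smul_add_sum_smul_eq_smul hBmul hbracket β₀ β
  have hsandwich : B 0 * A * B 0 = 0 :=
    mul_mul_eq_zero_of_lie_eq_smul (c := β₀ * lam) hB₀ hbracketA
  refine ⟨hP ▸ isUnit_one_add_smul hB₀ g, ?_⟩
  rw [hPinv, hP, map_one_add_smul_of_map_eq_zero hδadd hδmul (hBconst 0), one_sub_smul_mul_gauge hB₀,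
    hbracketA, hsandwich, hg, hA, ← add_sum_erase _ _ (mem_univ 0)]
  module

/-- Partial reduction in the monogenous case: if `⁅A₀, B₁⁆ = λ • B₁` with `λ` constant,
the matrices `A₀, Bᵢ` are constant, the `Bᵢ` pairwise annihilate each other, and `g` solves
`g' = λ β₀ g + β₁`, then the gauge transformation by `P = 1 + g • B₁` turns
`A = β₀ • A₀ + Σ βᵢ • Bᵢ` into `β₀ • A₀ + Σ_{i ≥ 2} βᵢ • Bᵢ`. -/
theorem partial_reduction_eigenvalue
    (k : Type*) [CommRing k] (δ : k → k)
    (hδadd : ∀ a b : k, δ (a + b) = δ a + δ b)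
    (hδmul : ∀ a b : k, δ (a * b) = a * δ b + δ a * b)
    (n r : ℕ)
    (A₀ : Matrix (Fin n) (Fin n) k) (B : Fin (r + 1) → Matrix (Fin n) (Fin n) k)
    (hA₀const : A₀.map δ = 0)
    (hBconst : ∀ i, (B i).map δ = 0)
    (hBmul : ∀ i j, B i * B j = 0)
    (lam : k) (hlam : δ lam = 0)
    (hbracket : ⁅A₀, B 0⁆ = lam • B 0)
    (β₀ : k) (β : Fin (r + 1) → k)
    (A : Matrix (Fin n) (Fin n) k) (hA : A = β₀ • A₀ + ∑ i, β i • B i)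
    (g : k) (hg : δ g = lam * β₀ * g + β 0)
    (P : Matrix (Fin n) (Fin n) k) (hP : P = 1 + g • B 0) :
    IsUnit P ∧
      P⁻¹ * (A * P - P.map δ) =
        β₀ • A₀ + ∑ i ∈ Finset.univ.erase 0, β i • B i :=
  partial_reduction_eigenvalue_general k δ hδadd hδmul n r A₀ B hBconst hBmul lam hbracket β₀ β A hA
    g hg P hP
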